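/- Let L(s) = L_a(s) be an H-curve in Gr_{p,q} with invariants 0 ≤ a_1 ≤ … ≤ a_p. If s_1 < s_2 < s_3 and a_p(s_3 − s_1) ≤ π/2 (so that all three points are pairwise sufficiently near), then for every j = 1,…,p: Ψ_j[L(s_1), L(s_2)] + Ψ_j[L(s_2), L(s_3)] = Ψ_j[L(s_1), L(s_3)]. -/

import Mathlib

open Module Submodule Real Set
open scoped RealInnerProductSpace

/-- Decreasing rearrangement of a tuple of reals. -/
noncomputable def sortDesc {n : ℕ} (v : Fin n → ℝ) : Fin n → ℝ :=
  fun i => v (Tuple.sort v i.rev)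

/-- The singular values of a real `m × n` matrix, listed in decreasing order:
the square roots of the eigenvalues of `A * Aᵀ`. -/
noncomputable def matSingVals {m n : ℕ} (A : Matrix (Fin m) (Fin n) ℝ) : Fin m → ℝ :=
  sortDesc fun i => Real.sqrt ((Matrix.isHermitian_mul_conjTranspose_self A).eigenvalues i)

/-- `v` is an orthonormal basis of the subspace `L`. -/
def IsONBasisOf {n m : ℕ} (v : Fin m → EuclideanSpace ℝ (Fin n))
    (L : Submodule ℝ (EuclideanSpace ℝ (Fin n))) : Prop :=
  Orthonormal ℝ v ∧ Submodule.span ℝ (Set.range v) = L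

/-- The matrix `⟨e i, f j⟩`. -/
noncomputable def grammian {n m : ℕ} (e f : Fin m → EuclideanSpace ℝ (Fin n)) :
    Matrix (Fin m) (Fin m) ℝ :=
  Matrix.of fun i j => ⟪e i, f j⟫

open Classical in
/-- `λ_1[L,M] ≥ … ≥ λ_p[L,M]`: the singular values of the matrix `⟨e i, f j⟩` formed from
orthonormal bases of `L` and `M` (independent of the choice of bases). -/
noncomputable def subSingVals (p : ℕ) {n : ℕ}
    (L M : Submodule ℝ (EuclideanSpace ℝ (Fin n))) : Fin p → ℝ :=
  if h : (∃ e : Fin p → EuclideanSpace ℝ (Fin n), IsONBasisOf e L) ∧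
         (∃ f : Fin p → EuclideanSpace ℝ (Fin n), IsONBasisOf f M)
  then matSingVals (grammian h.1.choose h.2.choose)
  else 0

/-- The Jordan angles `Ψ_1[L,M] ≤ … ≤ Ψ_p[L,M]`. -/
noncomputable def jordanAngles (p : ℕ) {n : ℕ}
    (L M : Submodule ℝ (EuclideanSpace ℝ (Fin n))) : Fin p → ℝ :=
  fun i => Real.arccos (subSingVals p L M i)

/-- The orbit of a vector under the group `W_p` of signed permutations of the coordinates. -/
def WOrbit {p : ℕ} (v : Fin p → ℝ) : Set (Fin p → ℝ) :=
  {w | ∃ (σ : Equiv.Perm (Fin p)) (ε : Fin p → ℝ),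
    (∀ i, ε i = 1 ∨ ε i = -1) ∧ w = fun i => ε i * v (σ i)}

/-! The vectors `v_j(s)` form an orthonormal basis of `L(s)` with
`⟪v_i(s), v_j(t)⟫ = δ_ij cos (a_j (t - s))`. Changing orthonormal bases multiplies the Gram matrix
by orthogonal matrices on both sides, which does not change its singular values, so the singular
values of `L(s), L(t)` are the numbers `cos (a_j (t - s))`; when `0 ≤ a_j (t - s) ≤ π/2` these are
nonnegative and already in decreasing order. Hence `Ψ_j[L(s), L(t)] = a_j (t - s)`, which is
additive in `t - s`. -/

section

open Matrix Polynomial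

theorem sortDesc_eq_of_map_univ_eq {n : ℕ} {v w : Fin n → ℝ}
    (hvw : Finset.univ.val.map v = Finset.univ.val.map w) (hw : Antitone w) :
    sortDesc v = w := by
  have hperm : (List.ofFn (v ∘ Tuple.sort v)).Perm (List.ofFn (w ∘ Fin.revPerm)) := by
    refine ((Equiv.Perm.ofFn_comp_perm _ v).trans ?_).trans (Equiv.Perm.ofFn_comp_perm _ w).symm
    simpa only [Fin.univ_val_map, Multiset.coe_eq_coe] using hvw
  have hw' : Monotone (w ∘ Fin.revPerm) := hw.comp Fin.rev_anti
  have hsorted := List.Perm.eq_of_sortedLE (Tuple.monotone_sort v).sortedLE_ofFn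
    hw'.sortedLE_ofFn hperm
  funext i
  simpa [sortDesc] using congrFun (List.ofFn_injective hsorted) i.rev

theorem roots_prod_X_sub_C_univ {ι R : Type*} [Fintype ι] [CommRing R] [IsDomain R]
    (d : ι → R) : (∏ i, (X - C (d i))).roots = Finset.univ.val.map d := by
  rw [Polynomial.roots_prod _ _ (by simp [Finset.prod_ne_zero_iff, X_sub_C_ne_zero])]
  simp

theorem matSingVals_diagonal {m : ℕ} {c : Fin m → ℝ} (hc0 : ∀ i, 0 ≤ c i) (hc : Antitone c) :
    matSingVals (diagonal c) = c := by
  have hH := isHermitian_mul_conjTranspose_self (diagonal c)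
  have hsq : diagonal c * (diagonal c)ᴴ = diagonal (fun i => c i * c i) := by
    simp [diagonal_mul_diagonal]
  have heig : Finset.univ.val.map hH.eigenvalues = Finset.univ.val.map (fun i => c i * c i) := by
    have hchar : (diagonal c * (diagonal c)ᴴ).charpoly = ∏ i, (X - C (c i * c i)) := by
      rw [hsq, charpoly_diagonal]
    have := hH.roots_charpoly_eq_eigenvalues
    rw [hchar, roots_prod_X_sub_C_univ] at this
    simpa using this.symm
  refine sortDesc_eq_of_map_univ_eq ?_ hc
  have := congrArg (Multiset.map Real.sqrt) heig
  simpa [Multiset.map_map, Function.comp_def, Real.sqrt_mul_self (hc0 _)] using this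

theorem matSingVals_orthogonal_mul_mul_transpose {m n : ℕ} (A : Matrix (Fin m) (Fin n) ℝ)
    {U : Matrix (Fin m) (Fin m) ℝ} {V : Matrix (Fin n) (Fin n) ℝ}
    (hU : U ∈ orthogonalGroup (Fin m) ℝ) (hV : V ∈ orthogonalGroup (Fin n) ℝ) :
    matSingVals (U * A * Vᵀ) = matSingVals A := by
  have hU' : Uᵀ * U = 1 := (mem_orthogonalGroup_iff' _ _).mp hU
  have hV' : Vᵀ * V = 1 := (mem_orthogonalGroup_iff' _ _).mp hV
  have hconj : U * A * Vᵀ * (U * A * Vᵀ)ᴴ = U * (A * Aᴴ * Uᵀ) := by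
    simp only [conjTranspose_eq_transpose_of_trivial, transpose_mul, transpose_transpose,
      Matrix.mul_assoc]
    rw [← Matrix.mul_assoc Vᵀ V, hV', Matrix.one_mul]
  have hchar : (U * A * Vᵀ * (U * A * Vᵀ)ᴴ).charpoly = (A * Aᴴ).charpoly := by
    rw [hconj, charpoly_mul_comm, Matrix.mul_assoc, hU', Matrix.mul_one]
  unfold matSingVals
  rw [(isHermitian_mul_conjTranspose_self _).eigenvalues_eq_eigenvalues_iff
    (isHermitian_mul_conjTranspose_self _) |>.mpr hchar]

theorem Orthonormal.sum_inner_mul_inner_of_mem_span {ι E : Type*} [Fintype ι]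
    [NormedAddCommGroup E] [InnerProductSpace ℝ E] {v : ι → E} (hv : Orthonormal ℝ v)
    {x : E} (hx : x ∈ span ℝ (range v)) (y : E) :
    ∑ k, ⟪x, v k⟫ * ⟪v k, y⟫ = ⟪x, y⟫ := by
  obtain ⟨c, rfl⟩ := (mem_span_range_iff_exists_fun ℝ).mp hx
  simp [sum_inner, real_inner_smul_left, hv.inner_left_fintype]

section Grammian

variable {n m : ℕ}

theorem grammian_transpose (e f : Fin m → EuclideanSpace ℝ (Fin n)) :
    (grammian e f)ᵀ = grammian f e := by
  ext i j
  exact real_inner_comm (f i) (e j)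

theorem grammian_self_of_orthonormal {e : Fin m → EuclideanSpace ℝ (Fin n)}
    (he : Orthonormal ℝ e) : grammian e e = 1 := by
  ext i j
  simpa [grammian, Matrix.one_apply] using orthonormal_iff_ite.mp he i j

theorem grammian_mul_grammian_of_mem_span_left {x e y : Fin m → EuclideanSpace ℝ (Fin n)}
    (he : Orthonormal ℝ e) (hx : ∀ i, x i ∈ span ℝ (range e)) :
    grammian x e * grammian e y = grammian x y := by
  ext i j
  exact he.sum_inner_mul_inner_of_mem_span (hx i) (y j)

theorem grammian_mul_grammian_of_mem_span_right {x e y : Fin m → EuclideanSpace ℝ (Fin n)}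
    (he : Orthonormal ℝ e) (hy : ∀ j, y j ∈ span ℝ (range e)) :
    grammian x e * grammian e y = grammian x y := by
  ext i j
  calc
    _ = ∑ k, ⟪y j, e k⟫ * ⟪e k, x i⟫ := by
      simp only [mul_apply, grammian, of_apply]
      exact Finset.sum_congr rfl fun k _ => by
        rw [real_inner_comm (x i), real_inner_comm (y j), mul_comm]
    _ = grammian x y i j := (he.sum_inner_mul_inner_of_mem_span (hy j) (x i)).trans
        (real_inner_comm _ _)

theorem IsONBasisOf.mem {e : Fin m → EuclideanSpace ℝ (Fin n)}
    {L : Submodule ℝ (EuclideanSpace ℝ (Fin n))} (he : IsONBasisOf e L) (i : Fin m) :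
    e i ∈ L :=
  he.2 ▸ subset_span ⟨i, rfl⟩

theorem grammian_mem_orthogonalGroup {e e' : Fin m → EuclideanSpace ℝ (Fin n)}
    {L : Submodule ℝ (EuclideanSpace ℝ (Fin n))} (he : IsONBasisOf e L)
    (he' : IsONBasisOf e' L) : grammian e' e ∈ orthogonalGroup (Fin m) ℝ := by
  rw [mem_orthogonalGroup_iff, grammian_transpose,
    grammian_mul_grammian_of_mem_span_left he.1 fun i => he.2 ▸ he'.mem i,
    grammian_self_of_orthonormal he'.1]

theorem subSingVals_eq_matSingVals_grammian {e f : Fin m → EuclideanSpace ℝ (Fin n)}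
    {L M : Submodule ℝ (EuclideanSpace ℝ (Fin n))} (he : IsONBasisOf e L)
    (hf : IsONBasisOf f M) : subSingVals m L M = matSingVals (grammian e f) := by
  have hbases : (∃ e, IsONBasisOf e L) ∧ ∃ f, IsONBasisOf f M := ⟨⟨e, he⟩, ⟨f, hf⟩⟩
  rw [subSingVals, dif_pos hbases]
  obtain ⟨he', hf'⟩ := And.intro hbases.1.choose_spec hbases.2.choose_spec
  generalize hbases.1.choose = e' at he' ⊢
  generalize hbases.2.choose = f' at hf' ⊢
  have hchange : grammian e' f' = grammian e' e * grammian e f * (grammian f' f)ᵀ := by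
    rw [grammian_transpose, Matrix.mul_assoc,
      grammian_mul_grammian_of_mem_span_right hf.1 fun j => hf.2 ▸ hf'.mem j,
      grammian_mul_grammian_of_mem_span_left he.1 fun i => he.2 ▸ he'.mem i]
  rw [hchange, matSingVals_orthogonal_mul_mul_transpose _ (grammian_mem_orthogonalGroup he he')
    (grammian_mem_orthogonalGroup hf hf')]

end Grammian

section HCurve

variable {ι E : Type*}

noncomputable def hCurveFrame [AddCommGroup E] [Module ℝ E] (a : ι → ℝ) (e f : ι → E) (s : ℝ) :
    ι → E :=
  fun j => cos (a j * s) • e j + sin (a j * s) • f j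

variable [NormedAddCommGroup E] [InnerProductSpace ℝ E] [DecidableEq ι] {a : ι → ℝ} {e f : ι → E}

theorem inner_hCurveFrame (horth : Orthonormal ℝ (Sum.elim e f)) (s t : ℝ) (i j : ι) :
    ⟪hCurveFrame a e f s i, hCurveFrame a e f t j⟫ =
      if i = j then cos (a i * (t - s)) else 0 := by
  have hinner := orthonormal_iff_ite.mp horth
  have hee : ⟪e i, e j⟫ = if i = j then 1 else 0 := by simpa using hinner (.inl i) (.inl j)
  have hef : ⟪e i, f j⟫ = 0 := by simpa using hinner (.inl i) (.inr j)
  have hfe : ⟪f i, e j⟫ = 0 := by simpa using hinner (.inr i) (.inl j)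
  have hff : ⟪f i, f j⟫ = if i = j then 1 else 0 := by simpa using hinner (.inr i) (.inr j)
  simp only [hCurveFrame, inner_add_left, inner_add_right, real_inner_smul_left,
    real_inner_smul_right, hee, hef, hfe, hff]
  split_ifs with hij
  · subst hij
    rw [mul_sub, cos_sub]
    ring
  · simp

theorem orthonormal_hCurveFrame (horth : Orthonormal ℝ (Sum.elim e f)) (s : ℝ) :
    Orthonormal ℝ (hCurveFrame a e f s) :=
  orthonormal_iff_ite.mpr fun i j => by simp [inner_hCurveFrame horth]

end HCurve

section HCurveAngles

variable {n p : ℕ} {a : Fin p → ℝ} {e f : Fin p → EuclideanSpace ℝ (Fin n)}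

theorem grammian_hCurveFrame (horth : Orthonormal ℝ (Sum.elim e f)) (s t : ℝ) :
    grammian (hCurveFrame a e f s) (hCurveFrame a e f t) =
      diagonal fun j => cos (a j * (t - s)) := by
  ext i j
  simp [grammian, inner_hCurveFrame horth, diagonal_apply]

theorem subSingVals_hCurve (horth : Orthonormal ℝ (Sum.elim e f)) (ha0 : ∀ j, 0 ≤ a j)
    (ha : Monotone a) {s t : ℝ} (hst : s ≤ t) (hnear : ∀ j, a j * (t - s) ≤ π / 2) :
    subSingVals p (span ℝ (range (hCurveFrame a e f s))) (span ℝ (range (hCurveFrame a e f t))) =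
      fun j => cos (a j * (t - s)) := by
  have hangle0 : ∀ j, 0 ≤ a j * (t - s) := fun j => mul_nonneg (ha0 j) (sub_nonneg.mpr hst)
  rw [subSingVals_eq_matSingVals_grammian ⟨orthonormal_hCurveFrame horth s, rfl⟩
    ⟨orthonormal_hCurveFrame horth t, rfl⟩, grammian_hCurveFrame horth]
  refine matSingVals_diagonal (fun j => cos_nonneg_of_mem_Icc ⟨?_, hnear j⟩) fun i j hij => ?_
  · linarith [hangle0 j, pi_pos]
  · exact cos_le_cos_of_nonneg_of_le_pi (hangle0 i) (by linarith [hnear j, pi_pos])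
      (mul_le_mul_of_nonneg_right (ha hij) (sub_nonneg.mpr hst))

theorem jordanAngles_hCurve (horth : Orthonormal ℝ (Sum.elim e f)) (ha0 : ∀ j, 0 ≤ a j)
    (ha : Monotone a) {s t : ℝ} (hst : s ≤ t) (hnear : ∀ j, a j * (t - s) ≤ π / 2) :
    jordanAngles p (span ℝ (range (hCurveFrame a e f s))) (span ℝ (range (hCurveFrame a e f t))) =
      fun j => a j * (t - s) := by
  funext j
  rw [jordanAngles, subSingVals_hCurve horth ha0 ha hst hnear]
  exact arccos_cos (mul_nonneg (ha0 j) (sub_nonneg.mpr hst)) (by linarith [hnear j, pi_pos])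

end HCurveAngles

end

/-- Additivity of Jordan angles along an `H`-curve: if `L(s)` is the `H`-curve with
invariants `0 ≤ a_1 ≤ … ≤ a_p` built from an orthonormal system `e_1,…,e_p,f_1,…,f_p`,
and `s₁ < s₂ < s₃` with `a_p (s₃ - s₁) ≤ π/2`, then for every `j`
`Ψ_j[L(s₁),L(s₂)] + Ψ_j[L(s₂),L(s₃)] = Ψ_j[L(s₁),L(s₃)]`. -/
theorem jordanAngles_additive_on_HCurve (p q : ℕ) (hp : 1 ≤ p)
    (a : Fin p → ℝ) (ha0 : ∀ j, 0 ≤ a j) (hamono : Monotone a)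
    (e f : Fin p → EuclideanSpace ℝ (Fin (p + q)))
    (horth : Orthonormal ℝ (Sum.elim e f))
    (Lc : ℝ → Submodule ℝ (EuclideanSpace ℝ (Fin (p + q))))
    (hLc : Lc = fun s => Submodule.span ℝ
      (Set.range fun j : Fin p => Real.cos (a j * s) • e j + Real.sin (a j * s) • f j))
    (s₁ s₂ s₃ : ℝ) (h12 : s₁ < s₂) (h23 : s₂ < s₃)
    (hnear : a ⟨p - 1, by omega⟩ * (s₃ - s₁) ≤ π / 2) :
    ∀ j : Fin p,
      jordanAngles p (Lc s₁) (Lc s₂) j + jordanAngles p (Lc s₂) (Lc s₃) j =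
        jordanAngles p (Lc s₁) (Lc s₃) j := by
  have hangle : ∀ {s t}, s₁ ≤ s → s ≤ t → t ≤ s₃ →
      jordanAngles p (Lc s) (Lc t) = fun j => a j * (t - s) := by
    intro s t h1s hst ht3
    subst hLc
    refine jordanAngles_hCurve horth ha0 hamono hst fun j => le_trans ?_ hnear
    exact mul_le_mul (hamono (show (j : ℕ) ≤ p - 1 by omega)) (by linarith)
      (sub_nonneg.mpr hst) (ha0 _)
  intro j
  rw [hangle le_rfl h12.le h23.le, hangle h12.le h23.le le_rfl,
    hangle le_rfl (h12.trans h23).le le_rfl]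
  ring
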